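/- arXiv:2511.12608 — 2 statements merged into one kernel-verified Lean document; each statement's English description precedes it below -/
import Mathlib

section
/- Let f : G → H be a graph map between simple graphs with f(v) = w for vertices v of G and w of H, and let k ≥ 2 be an integer. If γ is a path in G from v to v, then f ∘ γ is a path in H from w to w, and if paths γ, γ' in G from v to v satisfy γ ≃_k γ', then f ∘ γ ≃_k f ∘ γ' in H. Consequently, f induces a group homomorphism π₁^k[G,v] → π₁^k[H,w] sending [γ]_k to [f ∘ γ]_k. -/
/-- A path of length `len` in a simple graph `G` from `v` to `w`: a function on `{0,…,len}`
(encoded as a function `ℕ → V` that is constantly `w` from index `len` on) whose consecutive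
values are adjacent or equal. -/
structure GPath {V : Type*} (G : SimpleGraph V) (v w : V) where
  len : ℕ
  toFun : ℕ → V
  source : toFun 0 = v
  target : toFun len = w
  step : ∀ i < len, G.Adj (toFun i) (toFun (i + 1)) ∨ toFun i = toFun (i + 1)
  junk : ∀ i, len ≤ i → toFun i = w

namespace GPath

variable {V : Type*} {G : SimpleGraph V}

/-- The constant path of length 0 at a vertex. -/
def refl (G : SimpleGraph V) (v : V) : GPath G v v where
  len := 0
  toFun := fun _ => v
  source := rfl
  target := rfl
  step := fun i hi => absurd hi (Nat.not_lt_zero i)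
  junk := fun _ _ => rfl

/-- Concatenation of composable paths. -/
def concat {u v w : V} (γ : GPath G u v) (δ : GPath G v w) : GPath G u w where
  len := γ.len + δ.len
  toFun := fun i => if i < γ.len then γ.toFun i else δ.toFun (i - γ.len)
  source := by
    by_cases h : 0 < γ.len
    · simpa [h] using γ.source
    · have h0 : γ.len = 0 := by omega
      have huv : u = v := by
        have h1 := γ.source; have h2 := γ.target
        rw [h0] at h2; rw [h1] at h2; exact h2
      show (if 0 < γ.len then γ.toFun 0 else δ.toFun (0 - γ.len)) = u
      rw [if_neg h, Nat.zero_sub, δ.source]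
      exact huv.symm
  target := by
    have h : ¬ γ.len + δ.len < γ.len := by omega
    have h2 : γ.len + δ.len - γ.len = δ.len := by omega
    simp only [h, if_false, h2, δ.target]
  step := by
    intro i hi
    by_cases h1 : i + 1 < γ.len
    · have h0 : i < γ.len := by omega
      simpa [h0, h1] using γ.step i h0
    · by_cases h0 : i < γ.len
      · -- i + 1 = γ.len
        have he : i + 1 = γ.len := by omega
        have h3 : i + 1 - γ.len = 0 := by omega
        have hval : δ.toFun (i + 1 - γ.len) = γ.toFun (i + 1) := by
          rw [h3, δ.source, he, γ.target]
        simp only [h0, if_true, h1, if_false, hval]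
        exact γ.step i h0
      · have h3 : i + 1 - γ.len = (i - γ.len) + 1 := by omega
        simp only [h0, if_false, h1, if_false, h3]
        exact δ.step (i - γ.len) (by omega)
  junk := by
    intro i hi
    have h : ¬ i < γ.len := by omega
    simp only [h, if_false]
    exact δ.junk _ (by omega)

/-- The reverse of a path: `γ̄(i) = γ(len − i)`. -/
def reverse {v w : V} (γ : GPath G v w) : GPath G w v where
  len := γ.len
  toFun := fun i => γ.toFun (γ.len - i)
  source := by simpa using γ.target
  target := by simpa using γ.source
  step := by
    intro i hi
    show G.Adj (γ.toFun (γ.len - i)) (γ.toFun (γ.len - (i + 1))) ∨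
      γ.toFun (γ.len - i) = γ.toFun (γ.len - (i + 1))
    have h1 : γ.len - i = (γ.len - (i + 1)) + 1 := by omega
    rcases γ.step (γ.len - (i + 1)) (by omega) with h | h
    · exact Or.inl (by rw [h1]; exact h.symm)
    · exact Or.inr (by rw [h1, ← h])
  junk := by
    intro i hi
    show γ.toFun (γ.len - i) = v
    have h : γ.len - i = 0 := by omega
    rw [h, γ.source]

end GPath

/-- Relation (A): `γ'` has length `l(γ) + 1` and agrees with `γ` up to an index `x` and,
shifted by one, from `x` on. -/
def RelA {V : Type*} {G : SimpleGraph V} {v w : V} (γ γ' : GPath G v w) : Prop :=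
  γ'.len = γ.len + 1 ∧ ∃ x ≤ γ.len,
    (∀ i ≤ x, γ.toFun i = γ'.toFun i) ∧ (∀ i, x ≤ i → γ.toFun i = γ'.toFun (i + 1))

/-- Relation (B)_k: `γ` and `γ'` have equal length and agree up to some index `i₀` and from
`i₀ + k` on. -/
def RelB {V : Type*} (k : ℕ) {G : SimpleGraph V} {v w : V} (γ γ' : GPath G v w) : Prop :=
  γ.len = γ'.len ∧ ∃ i₀ ≤ γ.len,
    (∀ i ≤ i₀, γ.toFun i = γ'.toFun i) ∧ (∀ i, i₀ + k ≤ i → γ.toFun i = γ'.toFun i)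

/-- `≃_k`: the smallest equivalence relation on paths from `v` to `w` containing the
relations (A) and (B)_k.  The closed `k`-fundamental group `π₁^k[G,v]` is the quotient of
loops at `v` by `≃_k`. -/
def CEq {V : Type*} (k : ℕ) {G : SimpleGraph V} {v w : V} : GPath G v w → GPath G v w → Prop :=
  Relation.EqvGen (fun γ γ' => RelA γ γ' ∨ RelB k γ γ')

/-!
The generating relations (A) and (B)_k of `≃_k` only compare the values of two paths at
prescribed indices, so they survive post-composition with `f` and concatenation with a fixed
path on either side (on the left, after shifting all indices by its length). Hence
`[γ] ↦ [f ∘ γ]` is well defined, and it is multiplicative because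
`f ∘ (γ · δ) = (f ∘ γ) · (f ∘ δ)`.
-/

theorem Relation.EqvGen.map {α β : Type*} {r : α → α → Prop} {s : β → β → Prop}
    (g : α → β) {a b : α} (hab : EqvGen r a b) (h : ∀ a b, r a b → s (g a) (g b)) :
    EqvGen s (g a) (g b) :=
  (InvImage.equivalence _ g (EqvGen.is_equivalence s)).eqvGen_iff.mp
    (EqvGen.mono (fun a b hab => EqvGen.rel _ _ (h a b hab)) a b hab)

namespace GPath

variable {V : Type*} {G : SimpleGraph V}

theorem ext {v w : V} {γ δ : GPath G v w} (hlen : γ.len = δ.len)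
    (hfun : ∀ i, γ.toFun i = δ.toFun i) : γ = δ := by
  cases γ; cases δ
  simp_all [funext_iff]

theorem concat_toFun_of_le {u v w : V} (γ : GPath G u v) (δ : GPath G v w) {i : ℕ}
    (h : i ≤ γ.len) : (γ.concat δ).toFun i = γ.toFun i := by
  show (if i < γ.len then γ.toFun i else δ.toFun (i - γ.len)) = γ.toFun i
  rcases h.lt_or_eq with h | rfl
  · rw [if_pos h]
  · rw [if_neg (lt_irrefl _), Nat.sub_self, δ.source, γ.target]

theorem concat_toFun_of_ge {u v w : V} (γ : GPath G u v) (δ : GPath G v w) {i : ℕ}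
    (h : γ.len ≤ i) : (γ.concat δ).toFun i = δ.toFun (i - γ.len) :=
  if_neg h.not_gt

def map {W : Type*} {H : SimpleGraph W} {v w : V} (f : V → W)
    (hf : ∀ x y : V, G.Adj x y → H.Adj (f x) (f y) ∨ f x = f y)
    (γ : GPath G v w) : GPath H (f v) (f w) where
  len := γ.len
  toFun i := f (γ.toFun i)
  source := congrArg f γ.source
  target := congrArg f γ.target
  step i hi := (γ.step i hi).elim (hf _ _) (Or.inr ∘ congrArg f)
  junk i hi := congrArg f (γ.junk i hi)

theorem map_concat {W : Type*} {H : SimpleGraph W} {u v w : V} (f : V → W)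
    (hf : ∀ x y : V, G.Adj x y → H.Adj (f x) (f y) ∨ f x = f y)
    (γ : GPath G u v) (δ : GPath G v w) :
    (γ.concat δ).map f hf = (γ.map f hf).concat (δ.map f hf) := by
  refine ext rfl fun i => ?_
  rcases le_total i γ.len with h | h
  · exact (congrArg f (concat_toFun_of_le γ δ h)).trans
      (concat_toFun_of_le (γ.map f hf) (δ.map f hf) h).symm
  · exact (congrArg f (concat_toFun_of_ge γ δ h)).trans
      (concat_toFun_of_ge (γ.map f hf) (δ.map f hf) h).symm

end GPath

section Congruence

variable {V : Type*} {G : SimpleGraph V} {k : ℕ} {u v w : V}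

theorem RelA.map {W : Type*} {H : SimpleGraph W} (f : V → W)
    (hf : ∀ x y : V, G.Adj x y → H.Adj (f x) (f y) ∨ f x = f y)
    {γ γ' : GPath G v w} (h : RelA γ γ') : RelA (γ.map f hf) (γ'.map f hf) :=
  let ⟨hlen, x, hx, h₁, h₂⟩ := h
  ⟨hlen, x, hx, fun i hi => congrArg f (h₁ i hi), fun i hi => congrArg f (h₂ i hi)⟩

theorem RelB.map {W : Type*} {H : SimpleGraph W} (f : V → W)
    (hf : ∀ x y : V, G.Adj x y → H.Adj (f x) (f y) ∨ f x = f y)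
    {γ γ' : GPath G v w} (h : RelB k γ γ') : RelB k (γ.map f hf) (γ'.map f hf) :=
  let ⟨hlen, i₀, hi₀, h₁, h₂⟩ := h
  ⟨hlen, i₀, hi₀, fun i hi => congrArg f (h₁ i hi), fun i hi => congrArg f (h₂ i hi)⟩

theorem CEq.map {W : Type*} {H : SimpleGraph W} (f : V → W)
    (hf : ∀ x y : V, G.Adj x y → H.Adj (f x) (f y) ∨ f x = f y)
    {γ γ' : GPath G v w} (h : CEq k γ γ') : CEq k (γ.map f hf) (γ'.map f hf) :=
  Relation.EqvGen.map (GPath.map f hf) h fun _ _ hr => hr.imp (RelA.map f hf) (RelB.map f hf)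

open GPath

theorem RelA.concat_right {γ γ' : GPath G u v} (h : RelA γ γ') (δ : GPath G v w) :
    RelA (γ.concat δ) (γ'.concat δ) := by
  obtain ⟨hlen, x, hx, h₁, h₂⟩ := h
  refine ⟨by simp only [concat]; omega, x, by simp only [concat]; omega, fun i hi => ?_,
    fun i hi => ?_⟩
  · rw [concat_toFun_of_le γ δ (by omega), concat_toFun_of_le γ' δ (by omega), h₁ i hi]
  · rcases le_or_gt i γ.len with hc | hc
    · rw [concat_toFun_of_le γ δ hc, concat_toFun_of_le γ' δ (by omega), h₂ i hi]
    · rw [concat_toFun_of_ge γ δ hc.le, concat_toFun_of_ge γ' δ (by omega)]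
      congr 1
      omega

theorem RelA.concat_left {γ γ' : GPath G v w} (h : RelA γ γ') (δ : GPath G u v) :
    RelA (δ.concat γ) (δ.concat γ') := by
  obtain ⟨hlen, x, hx, h₁, h₂⟩ := h
  refine ⟨by simp only [concat]; omega, δ.len + x, by simp only [concat]; omega,
    fun i hi => ?_, fun i hi => ?_⟩
  · rcases le_or_gt i δ.len with hc | hc
    · rw [concat_toFun_of_le δ γ hc, concat_toFun_of_le δ γ' hc]
    · rw [concat_toFun_of_ge δ γ hc.le, concat_toFun_of_ge δ γ' hc.le,
        h₁ (i - δ.len) (by omega)]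
  · rw [concat_toFun_of_ge δ γ (by omega), concat_toFun_of_ge δ γ' (by omega),
      show i + 1 - δ.len = i - δ.len + 1 by omega, h₂ (i - δ.len) (by omega)]

theorem RelB.concat_right {γ γ' : GPath G u v} (h : RelB k γ γ') (δ : GPath G v w) :
    RelB k (γ.concat δ) (γ'.concat δ) := by
  obtain ⟨hlen, i₀, hi₀, h₁, h₂⟩ := h
  refine ⟨by simp only [concat]; omega, i₀, by simp only [concat]; omega, fun i hi => ?_,
    fun i hi => ?_⟩
  · rw [concat_toFun_of_le γ δ (by omega), concat_toFun_of_le γ' δ (by omega), h₁ i hi]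
  · rcases le_or_gt i γ.len with hc | hc
    · rw [concat_toFun_of_le γ δ hc, concat_toFun_of_le γ' δ (by omega), h₂ i hi]
    · rw [concat_toFun_of_ge γ δ hc.le, concat_toFun_of_ge γ' δ (by omega), hlen]

theorem RelB.concat_left {γ γ' : GPath G v w} (h : RelB k γ γ') (δ : GPath G u v) :
    RelB k (δ.concat γ) (δ.concat γ') := by
  obtain ⟨hlen, i₀, hi₀, h₁, h₂⟩ := h
  refine ⟨by simp only [concat]; omega, δ.len + i₀, by simp only [concat]; omega,
    fun i hi => ?_, fun i hi => ?_⟩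
  · rcases le_or_gt i δ.len with hc | hc
    · rw [concat_toFun_of_le δ γ hc, concat_toFun_of_le δ γ' hc]
    · rw [concat_toFun_of_ge δ γ hc.le, concat_toFun_of_ge δ γ' hc.le,
        h₁ (i - δ.len) (by omega)]
  · rw [concat_toFun_of_ge δ γ (by omega), concat_toFun_of_ge δ γ' (by omega),
      h₂ (i - δ.len) (by omega)]

theorem CEq.concat {a a' : GPath G u v} {b b' : GPath G v w} (ha : CEq k a a')
    (hb : CEq k b b') : CEq k (a.concat b) (a'.concat b') :=
  have right : CEq k (a.concat b) (a'.concat b) :=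
    Relation.EqvGen.map (fun p : GPath G u v => p.concat b) ha fun _ _ hr =>
      hr.imp (·.concat_right b) (·.concat_right b)
  have left : CEq k (a'.concat b) (a'.concat b') :=
    Relation.EqvGen.map a'.concat hb fun _ _ hr => hr.imp (·.concat_left a') (·.concat_left a')
  right.trans _ _ _ left

theorem CEq.of_quot_mk_eq {γ γ' : GPath G v w} (h : Quot.mk (CEq k) γ = Quot.mk (CEq k) γ') :
    CEq k γ γ' :=
  ((Relation.EqvGen.is_equivalence _).quot_mk_eq_iff γ γ').mp h

end Congruence

theorem graphMap_induces_hom_general {V W : Type*} (G : SimpleGraph V) (H : SimpleGraph W)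
    (f : V → W) (hf : ∀ x y : V, G.Adj x y → H.Adj (f x) (f y) ∨ f x = f y)
    (v : V) (w : W) (hfv : f v = w) (k : ℕ) :
    (∀ γ : GPath G v v, ∃ δ : GPath H w w,
      δ.len = γ.len ∧ ∀ i : ℕ, δ.toFun i = f (γ.toFun i)) ∧
    (∀ γ γ' : GPath G v v, CEq k γ γ' →
      ∀ δ δ' : GPath H w w,
        (δ.len = γ.len ∧ ∀ i : ℕ, δ.toFun i = f (γ.toFun i)) →
        (δ'.len = γ'.len ∧ ∀ i : ℕ, δ'.toFun i = f (γ'.toFun i)) →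
        CEq k δ δ') ∧
    (∃ Φ : Quot (CEq k (G := G) (v := v) (w := v)) →
           Quot (CEq k (G := H) (v := w) (w := w)),
      (∀ (γ : GPath G v v) (δ : GPath H w w),
        (δ.len = γ.len ∧ ∀ i : ℕ, δ.toFun i = f (γ.toFun i)) →
        Φ (Quot.mk _ γ) = Quot.mk _ δ) ∧
      (∀ (a b : GPath G v v) (x y : GPath H w w),
        Φ (Quot.mk _ a) = Quot.mk _ x → Φ (Quot.mk _ b) = Quot.mk _ y →
        Φ (Quot.mk _ (a.concat b)) = Quot.mk _ (x.concat y))) := by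
  subst hfv
  have eq_map : ∀ (γ : GPath G v v) (δ : GPath H (f v) (f v)),
      (δ.len = γ.len ∧ ∀ i, δ.toFun i = f (γ.toFun i)) → δ = γ.map f hf :=
    fun _ _ h => GPath.ext h.1 h.2
  refine ⟨fun γ => ⟨γ.map f hf, rfl, fun _ => rfl⟩, ?_,
    Quot.map (GPath.map f hf) fun _ _ => CEq.map f hf, ?_, ?_⟩
  · intro γ γ' h δ δ' hδ hδ'
    rw [eq_map γ δ hδ, eq_map γ' δ' hδ']
    exact h.map f hf
  · intro γ δ hδ
    rw [eq_map γ δ hδ]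
    rfl
  · intro a b x y hx hy
    show Quot.mk _ ((a.concat b).map f hf) = _
    rw [GPath.map_concat]
    exact Quot.sound (CEq.concat (CEq.of_quot_mk_eq hx) (CEq.of_quot_mk_eq hy))

/-- Let `f : G → H` be a graph map with `f(v) = w`, and `k ≥ 2`.  Then every path `γ` in `G`
from `v` to `v` yields a path `f ∘ γ` in `H` from `w` to `w`; if `γ ≃_k γ'` then
`f ∘ γ ≃_k f ∘ γ'`; and consequently `f` induces a homomorphism
`π₁^k[G,v] → π₁^k[H,w]` (a map on `≃_k`-classes sending `[γ]_k` to `[f ∘ γ]_k` and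
respecting concatenation). -/
theorem graphMap_induces_hom {V W : Type*} (G : SimpleGraph V) (H : SimpleGraph W)
    (f : V → W) (hf : ∀ x y : V, G.Adj x y → H.Adj (f x) (f y) ∨ f x = f y)
    (v : V) (w : W) (hfv : f v = w) (k : ℕ) (hk : 2 ≤ k) :
    (∀ γ : GPath G v v, ∃ δ : GPath H w w,
      δ.len = γ.len ∧ ∀ i : ℕ, δ.toFun i = f (γ.toFun i)) ∧
    (∀ γ γ' : GPath G v v, CEq k γ γ' →
      ∀ δ δ' : GPath H w w,
        (δ.len = γ.len ∧ ∀ i : ℕ, δ.toFun i = f (γ.toFun i)) →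
        (δ'.len = γ'.len ∧ ∀ i : ℕ, δ'.toFun i = f (γ'.toFun i)) →
        CEq k δ δ') ∧
    (∃ Φ : Quot (CEq k (G := G) (v := v) (w := v)) →
           Quot (CEq k (G := H) (v := w) (w := w)),
      (∀ (γ : GPath G v v) (δ : GPath H w w),
        (δ.len = γ.len ∧ ∀ i : ℕ, δ.toFun i = f (γ.toFun i)) →
        Φ (Quot.mk _ γ) = Quot.mk _ δ) ∧
      (∀ (a b : GPath G v v) (x y : GPath H w w),
        Φ (Quot.mk _ a) = Quot.mk _ x → Φ (Quot.mk _ b) = Quot.mk _ y →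
        Φ (Quot.mk _ (a.concat b)) = Quot.mk _ (x.concat y))) :=
  graphMap_induces_hom_general G H f hf v w hfv k
end

section
/- Let G be a simple graph, k ≥ 2 an integer, and v, w vertices of G. On the set Ω[G,v,w] of paths from v to w, the smallest equivalence relation containing the relations (A) and (B)_k coincides with the smallest equivalence relation containing the relations (A) and (B)'_k, where (B)'_k relates two paths γ, γ' of equal length such that the number of indices i with γ(i) ≠ γ'(i) is strictly less than k. -/
/-- Relation (B)'_k: `γ` and `γ'` have equal length and differ at fewer than `k` indices. -/
def RelB' {V : Type*} (k : ℕ) {G : SimpleGraph V} {v w : V} (γ γ' : GPath G v w) : Prop :=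
  γ.len = γ'.len ∧ {i : ℕ | γ.toFun i ≠ γ'.toFun i}.ncard < k

namespace Relation

theorem eqvGen_or_le_eqvGen_or {α : Type*} {r s t : α → α → Prop}
    (h : ∀ a b, s a b → EqvGen t a b) :
    EqvGen (fun a b => r a b ∨ s a b) ≤ EqvGen (fun a b => r a b ∨ t a b) :=
  EqvGen.eqvGen_le fun a b hab =>
    hab.elim (fun hr => .rel a b (.inl hr)) fun hs => EqvGen.mono (fun _ _ => .inr) a b (h a b hs)

end Relation

namespace GPath

variable {V : Type*} {G : SimpleGraph V} {v w : V}

theorem ext_of_len_toFun {γ γ' : GPath G v w} (hlen : γ.len = γ'.len)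
    (hfun : γ.toFun = γ'.toFun) : γ = γ' := by
  cases γ; cases γ'
  subst hlen hfun
  rfl

theorem adj_or_eq (γ : GPath G v w) (i : ℕ) :
    G.Adj (γ.toFun i) (γ.toFun (i + 1)) ∨ γ.toFun i = γ.toFun (i + 1) := by
  by_cases hi : i < γ.len
  · exact γ.step i hi
  · exact .inr <| by rw [γ.junk i (by omega), γ.junk (i + 1) (by omega)]

def splice (γ γ' : GPath G v w) (c : ℕ) (hc : γ.toFun c = γ'.toFun c) : GPath G v w where
  len := max γ.len γ'.len
  toFun i := if i ≤ c then γ.toFun i else γ'.toFun i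
  source := by simp [γ.source]
  target := by
    split_ifs
    · exact γ.junk _ (le_max_left _ _)
    · exact γ'.junk _ (le_max_right _ _)
  step i _ := by
    by_cases hic : i + 1 ≤ c
    · simpa [hic, show i ≤ c by omega] using γ.adj_or_eq i
    · by_cases hi : i = c
      · subst hi
        simpa [hc] using γ'.adj_or_eq i
      · simpa [hic, show ¬i ≤ c by omega] using γ'.adj_or_eq i
  junk i hi := by
    split_ifs
    · exact γ.junk i (le_of_max_le_left hi)
    · exact γ'.junk i (le_of_max_le_right hi)

theorem splice_apply_of_le {γ γ' : GPath G v w} {c : ℕ} (hc : γ.toFun c = γ'.toFun c) {i : ℕ}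
    (hi : i ≤ c) : (γ.splice γ' c hc).toFun i = γ.toFun i :=
  if_pos hi

theorem splice_apply_of_ge {γ γ' : GPath G v w} {c : ℕ} (hc : γ.toFun c = γ'.toFun c) {i : ℕ}
    (hi : c ≤ i) : (γ.splice γ' c hc).toFun i = γ'.toFun i := by
  by_cases hic : i = c
  · subst hic; exact (if_pos le_rfl).trans hc
  · exact if_neg (by omega)

def diffSet (γ γ' : GPath G v w) : Set ℕ := {i | γ.toFun i ≠ γ'.toFun i}

theorem diffSet_subset_Ioo (γ γ' : GPath G v w) :
    diffSet γ γ' ⊆ Set.Ioo 0 (max γ.len γ'.len) := by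
  intro i hi
  refine ⟨Nat.pos_of_ne_zero fun h0 => hi (by rw [h0, γ.source, γ'.source]), ?_⟩
  by_contra hle
  exact hi (by rw [γ.junk i (le_of_max_le_left (not_lt.mp hle)),
    γ'.junk i (le_of_max_le_right (not_lt.mp hle))])

theorem finite_diffSet (γ γ' : GPath G v w) : (diffSet γ γ').Finite :=
  (Set.finite_Ioo _ _).subset (diffSet_subset_Ioo γ γ')

theorem eq_of_diffSet_eq_empty {γ γ' : GPath G v w} (hlen : γ.len = γ'.len)
    (h : diffSet γ γ' = ∅) : γ = γ' :=
  ext_of_len_toFun hlen <| funext fun i => not_not.mp (Set.eq_empty_iff_forall_notMem.mp h i)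

end GPath

open GPath

section

variable {V : Type*} {G : SimpleGraph V} {v w : V} {k : ℕ} {γ γ' : GPath G v w}

theorem RelB.diffSet_subset_Ioo (h : RelB k γ γ') :
    ∃ i₀, diffSet γ γ' ⊆ Set.Ioo i₀ (i₀ + k) := by
  obtain ⟨-, i₀, -, hle, hge⟩ := h
  refine ⟨i₀, fun i hi => ⟨?_, ?_⟩⟩
  · by_contra h; exact hi (hle i (by omega))
  · by_contra h; exact hi (hge i (by omega))

theorem RelB.reflGen_relB' (h : RelB k γ γ') : Relation.ReflGen (RelB' k) γ γ' := by
  obtain ⟨i₀, hsub⟩ := h.diffSet_subset_Ioo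
  have hcard : (diffSet γ γ').ncard ≤ k - 1 := by
    have := Set.ncard_le_ncard hsub (Set.finite_Ioo _ _)
    rwa [← Finset.coe_Ioo, Set.ncard_coe_finset, Nat.card_Ioo, Nat.add_sub_cancel_left] at this
  rcases (diffSet γ γ').eq_empty_or_nonempty with hempty | hne
  · exact eq_of_diffSet_eq_empty h.1 hempty ▸ .refl
  · have := (Set.ncard_pos (finite_diffSet γ γ')).mpr hne
    exact .single ⟨h.1, show (diffSet γ γ').ncard < k by omega⟩

/-- The first maximal run `[a, b)` of differences is no longer than the whole set of differences,
so overwriting it by `γ'` is a single (B)_k move. -/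
theorem exists_relB_diffSet_ssubset (hlen : γ.len = γ'.len) (hne : (diffSet γ γ').Nonempty)
    (hk : (diffSet γ γ').ncard < k) :
    ∃ δ, RelB k γ δ ∧ diffSet δ γ' ⊂ diffSet γ γ' := by
  set D := diffSet γ γ'
  set a := sInf D
  have haD : a ∈ D := Nat.sInf_mem hne
  have hD := diffSet_subset_Ioo γ γ'
  rw [← hlen, max_self] at hD
  have hgap : {j | a ≤ j ∧ j ∉ D}.Nonempty := ⟨γ.len, (hD haD).2.le, fun h => (hD h).2.false⟩
  set b := sInf {j | a ≤ j ∧ j ∉ D}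
  obtain ⟨hab, hbD⟩ : a ≤ b ∧ b ∉ D := Nat.sInf_mem hgap
  have hrun : Set.Ico a b ⊆ D := fun j ⟨haj, hjb⟩ => by
    by_contra hj; exact Nat.notMem_of_lt_sInf hjb ⟨haj, hj⟩
  have hba : b - a < k := by
    have := Set.ncard_le_ncard hrun (finite_diffSet γ γ')
    rw [← Finset.coe_Ico, Set.ncard_coe_finset, Nat.card_Ico] at this
    omega
  have hb : γ'.toFun b = γ.toFun b := (not_not.mp hbD).symm
  obtain ⟨ha0, haγ⟩ := hD haD
  refine ⟨γ'.splice γ b hb, ⟨by simp [splice, hlen], a - 1, by omega, fun i hi => ?_,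
    fun i hi => (splice_apply_of_ge hb (by omega)).symm⟩, fun i hi => ?_, fun hsub => ?_⟩
  · have hia : i ∉ D := Nat.notMem_of_lt_sInf (by omega)
    rw [splice_apply_of_le hb (by omega)]
    exact not_not.mp hia
  · have hbi : b < i := by
      by_contra hib; exact hi (splice_apply_of_le hb (by omega))
    exact (splice_apply_of_ge hb hbi.le).symm.trans_ne hi
  · exact hsub haD (splice_apply_of_le hb hab)

theorem RelB'.reflTransGen_relB (h : RelB' k γ γ') : Relation.ReflTransGen (RelB k) γ γ' := by
  obtain ⟨hlen, hk⟩ := h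
  induction hn : (diffSet γ γ').ncard using Nat.strong_induction_on generalizing γ with
  | _ n ih =>
    rcases (diffSet γ γ').eq_empty_or_nonempty with hempty | hne
    · exact eq_of_diffSet_eq_empty hlen hempty ▸ .refl
    obtain ⟨δ, hδ, hsub⟩ := exists_relB_diffSet_ssubset hlen hne hk
    have hlt := Set.ncard_lt_ncard hsub (finite_diffSet γ γ')
    exact .head hδ (ih _ (hn ▸ hlt) (hδ.1.symm.trans hlen) (hlt.trans hk) rfl)

end

theorem eqvGen_relB_eq_relB'_general {V : Type*} (G : SimpleGraph V) (k : ℕ)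
    (v w : V) (γ γ' : GPath G v w) :
    Relation.EqvGen (fun a b : GPath G v w => RelA a b ∨ RelB k a b) γ γ' ↔
      Relation.EqvGen (fun a b : GPath G v w => RelA a b ∨ RelB' k a b) γ γ' :=
  ⟨Relation.eqvGen_or_le_eqvGen_or
      (fun a b h => Relation.EqvGen.reflGen_le_eqvGen _ a b h.reflGen_relB') γ γ',
    Relation.eqvGen_or_le_eqvGen_or
      (fun a b h => Relation.EqvGen.reflTransGen_le_eqvGen _ a b h.reflTransGen_relB) γ γ'⟩

/-- For `k ≥ 2`, on the set `Ω[G,v,w]` of paths from `v` to `w`, the smallest equivalence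
relation containing (A) and (B)_k coincides with the smallest equivalence relation
containing (A) and (B)'_k. -/
theorem eqvGen_relB_eq_relB' {V : Type*} (G : SimpleGraph V) (k : ℕ) (hk : 2 ≤ k)
    (v w : V) (γ γ' : GPath G v w) :
    Relation.EqvGen (fun a b : GPath G v w => RelA a b ∨ RelB k a b) γ γ' ↔
      Relation.EqvGen (fun a b : GPath G v w => RelA a b ∨ RelB' k a b) γ γ' :=
  eqvGen_relB_eq_relB'_general G k v w γ γ'
end
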